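/- arXiv:0802.3889 — 2 statements merged into one kernel-verified Lean document; each statement's English description precedes it below -/
import Mathlib

section
/- Let Δ₁, Δ₂ be integral convex polytopes containing the origin with denominators D₁ and D₂ respectively (the smallest positive integers D_i such that w_{Δ_i}(M_{Δ_i}) ⊆ (1/D_i)ℕ). Then the denominator of Δ = Δ₁ ⊕ Δ₂ is lcm(D₁, D₂). -/
open Set

/-- A (convex) polytope: the convex hull of a finite set of points. -/
def IsPolytope {V : Type*} [AddCommGroup V] [Module ℝ V] (P : Set V) : Prop :=
  ∃ s : Finset V, P = convexHull ℝ (s : Set V)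

/-- A face of `P`: the intersection of `P` with a supporting hyperplane,
together with `P` itself and the empty set. -/
def IsFaceOf {V : Type*} [AddCommGroup V] [Module ℝ V] (σ P : Set V) : Prop :=
  σ = P ∨ σ = ∅ ∨
    ∃ (l : V →ₗ[ℝ] ℝ) (c : ℝ), l ≠ 0 ∧ (∀ x ∈ P, l x ≤ c) ∧ σ = {x ∈ P | l x = c}

/-- The direct sum of `A ⊆ ℝ^{n₁}` and `B ⊆ ℝ^{n₂}`: the convex hull of
`(A × {0}) ∪ ({0} × B)` in `ℝ^{n₁+n₂}`. -/
def dSum {n₁ n₂ : ℕ} (A : Set (Fin n₁ → ℝ)) (B : Set (Fin n₂ → ℝ)) :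
    Set ((Fin n₁ → ℝ) × (Fin n₂ → ℝ)) :=
  convexHull ℝ ((fun x => (x, 0)) '' A ∪ (fun y => ((0 : Fin n₁ → ℝ), y)) '' B)

open Pointwise

/-- The cone over a set: `C(S) = { ρ • x : ρ ≥ 0, x ∈ S }`. -/
def rcone {V : Type*} [AddCommGroup V] [Module ℝ V] (S : Set V) : Set V :=
  {x | ∃ ρ : ℝ, 0 ≤ ρ ∧ ∃ s ∈ S, x = ρ • s}

/-- The weight of `u` with respect to `Δ`: `w_Δ(u) = inf { ρ ≥ 0 : u ∈ ρ Δ }`. -/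
noncomputable def wt {V : Type*} [AddCommGroup V] [Module ℝ V] (Δ : Set V) (u : V) : ℝ :=
  sInf {ρ : ℝ | 0 ≤ ρ ∧ u ∈ ρ • Δ}

/-- `x ∈ ℝ^n` is a lattice point (belongs to `ℤ^n`). -/
def isIntVec {n : ℕ} (x : Fin n → ℝ) : Prop := ∀ i, ∃ m : ℤ, x i = (m : ℝ)

/-- A polytope with vertices in the lattice described by the predicate `L`. -/
def IsIntegralPolytope {V : Type*} [AddCommGroup V] [Module ℝ V]
    (L : V → Prop) (Δ : Set V) : Prop :=
  ∃ s : Finset V, (∀ v ∈ s, L v) ∧ Δ = convexHull ℝ (s : Set V)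

/-- `D` is the denominator of `Δ` (with lattice predicate `L`): the smallest positive
integer such that the weight maps the monoid `M_Δ = C(Δ) ∩ ℤ^n` into `(1/D)ℕ`. -/
def IsDenomWith {V : Type*} [AddCommGroup V] [Module ℝ V]
    (L : V → Prop) (Δ : Set V) (D : ℕ) : Prop :=
  0 < D ∧ (∀ u ∈ rcone Δ, L u → ∃ m : ℕ, wt Δ u = (m : ℝ) / D) ∧
    ∀ D' : ℕ, 0 < D' → (∀ u ∈ rcone Δ, L u → ∃ m : ℕ, wt Δ u = (m : ℝ) / D') → D ≤ D'

/-!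
On the cone `C(Δ₁ ⊕ Δ₂) = C(Δ₁) × C(Δ₂)` the weight is additive,
`w(u₁, u₂) = w₁(u₁) + w₂(u₂)`, because the `ρ`-dilate of `Δ₁ ⊕ Δ₂` is the union of the
products `ρ₁ Δ₁ × ρ₂ Δ₂` over `ρ₁ + ρ₂ = ρ`. Hence all weights lie in `(1/lcm(D₁, D₂))ℕ`.
Conversely, if all weights lie in `(1/D)ℕ`, then restricting to the points `(u₁, 0)` and
`(0, u₂)` shows the same for `Δ₁` and `Δ₂`; the admissible denominators of a polytope are
closed under `gcd` (Bézout), so the least one divides every other, and `D₁, D₂ ∣ D`.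
-/

section Weight

variable {V : Type*} [AddCommGroup V] [Module ℝ V] {Δ : Set V} {u : V}

lemma mem_rcone_iff_nonempty :
    u ∈ rcone Δ ↔ {ρ : ℝ | 0 ≤ ρ ∧ u ∈ ρ • Δ}.Nonempty := by
  simp only [rcone, Set.Nonempty, mem_ofPred_eq, mem_smul_set, eq_comm]

lemma wt_nonneg : 0 ≤ wt Δ u :=
  Real.sInf_nonneg fun _ hρ => hρ.1

lemma wt_zero (h0 : (0 : V) ∈ Δ) : wt Δ 0 = 0 :=
  le_antisymm (csInf_le ⟨0, fun _ hρ => hρ.1⟩ ⟨le_rfl, 0, h0, smul_zero 0⟩) wt_nonneg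

lemma zero_mem_rcone (h0 : (0 : V) ∈ Δ) : (0 : V) ∈ rcone Δ :=
  ⟨1, zero_le_one, 0, h0, (smul_zero 1).symm⟩

lemma nonempty_of_mem_rcone (hu : u ∈ rcone Δ) : Δ.Nonempty := by
  obtain ⟨-, -, s, hs, -⟩ := hu
  exact ⟨s, hs⟩

/-- `w_Δ` maps the lattice points of `C(Δ)` into `(1/D)ℕ`; `IsDenomWith` asks for the least
such `D`. -/
def WtGradedBy (L : V → Prop) (Δ : Set V) (D : ℕ) : Prop :=
  ∀ u ∈ rcone Δ, L u → ∃ m : ℕ, wt Δ u = (m : ℝ) / D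

end Weight

lemma exists_nat_div_gcd {w : ℝ} (hw : 0 ≤ w) {D D' a b : ℕ} (hD : 0 < D) (hD' : 0 < D')
    (ha : w = a / D) (hb : w = b / D') : ∃ m : ℕ, w = m / Nat.gcd D D' := by
  have hwD : w * D = a := by rw [ha, div_mul_cancel₀ _ (by positivity)]
  have hwD' : w * D' = b := by rw [hb, div_mul_cancel₀ _ (by positivity)]
  obtain ⟨z, hz⟩ : ∃ z : ℤ, w * Nat.gcd D D' = z :=
    ⟨a * Nat.gcdA D D' + b * Nat.gcdB D D', by
      rw [← Int.cast_natCast, Nat.gcd_eq_gcd_ab]; push_cast; rw [← hwD, ← hwD']; ring⟩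
  lift z to ℕ using (by exact_mod_cast hz ▸ (by positivity : 0 ≤ w * Nat.gcd D D'))
  have hg : (Nat.gcd D D' : ℝ) ≠ 0 := by exact_mod_cast (Nat.gcd_pos_of_pos_left D' hD).ne'
  exact ⟨z, by rw [eq_div_iff hg, hz, Int.cast_natCast]⟩

lemma exists_nat_div_of_dvd {w : ℝ} {D L m : ℕ} (hL : 0 < L) (hDL : D ∣ L) (hw : w = m / D) :
    ∃ m' : ℕ, w = m' / L := by
  obtain ⟨k, rfl⟩ := hDL
  have hk : (k : ℝ) ≠ 0 := by exact_mod_cast (Nat.pos_of_mul_pos_left hL).ne'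
  exact ⟨m * k, by rw [hw]; push_cast; rw [mul_div_mul_right _ _ hk]⟩

section Denominator

variable {V : Type*} [AddCommGroup V] [Module ℝ V] {L : V → Prop} {Δ : Set V}

lemma WtGradedBy.gcd {D D' : ℕ} (h : WtGradedBy L Δ D) (h' : WtGradedBy L Δ D')
    (hD : 0 < D) (hD' : 0 < D') : WtGradedBy L Δ (Nat.gcd D D') := fun u hu hL => by
  obtain ⟨a, ha⟩ := h u hu hL
  obtain ⟨b, hb⟩ := h' u hu hL
  exact exists_nat_div_gcd wt_nonneg hD hD' ha hb

lemma IsDenomWith.dvd {D D' : ℕ} (h : IsDenomWith L Δ D) (hD' : 0 < D')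
    (h' : WtGradedBy L Δ D') : D ∣ D' := by
  have hle : D ≤ Nat.gcd D D' :=
    h.2.2 _ (Nat.gcd_pos_of_pos_left D' h.1) (WtGradedBy.gcd h.2.1 h' h.1 hD')
  have hgcd : Nat.gcd D D' = D := le_antisymm (Nat.gcd_le_left D' h.1) hle
  exact hgcd ▸ Nat.gcd_dvd_right D D'

end Denominator

lemma IsIntegralPolytope.convex {V : Type*} [AddCommGroup V] [Module ℝ V] {L : V → Prop}
    {Δ : Set V} (h : IsIntegralPolytope L Δ) : Convex ℝ Δ := by
  obtain ⟨s, -, rfl⟩ := h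
  exact convex_convexHull ℝ _

section DirectSum

variable {n₁ n₂ : ℕ} {Δ₁ : Set (Fin n₁ → ℝ)} {Δ₂ : Set (Fin n₂ → ℝ)}

lemma mem_dSum_iff (hc₁ : Convex ℝ Δ₁) (hc₂ : Convex ℝ Δ₂) (hne₁ : Δ₁.Nonempty)
    (hne₂ : Δ₂.Nonempty) {z : (Fin n₁ → ℝ) × (Fin n₂ → ℝ)} :
    z ∈ dSum Δ₁ Δ₂ ↔ ∃ t₁ t₂ : ℝ, 0 ≤ t₁ ∧ 0 ≤ t₂ ∧ t₁ + t₂ = 1 ∧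
      ∃ a ∈ Δ₁, ∃ b ∈ Δ₂, z = (t₁ • a, t₂ • b) := by
  have hA : Convex ℝ ((fun x => (x, (0 : Fin n₂ → ℝ))) '' Δ₁) :=
    hc₁.linear_image (LinearMap.inl ℝ _ _)
  have hB : Convex ℝ ((fun y => ((0 : Fin n₁ → ℝ), y)) '' Δ₂) :=
    hc₂.linear_image (LinearMap.inr ℝ _ _)
  rw [dSum, convexHull_union (hne₁.image _) (hne₂.image _), hA.convexHull_eq,
    hB.convexHull_eq, mem_convexJoin]
  constructor
  · rintro ⟨-, ⟨a, ha, rfl⟩, -, ⟨b, hb, rfl⟩, t₁, t₂, ht₁, ht₂, hsum, rfl⟩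
    exact ⟨t₁, t₂, ht₁, ht₂, hsum, a, ha, b, hb, by simp⟩
  · rintro ⟨t₁, t₂, ht₁, ht₂, hsum, a, ha, b, hb, rfl⟩
    exact ⟨(a, 0), ⟨a, ha, rfl⟩, (0, b), ⟨b, hb, rfl⟩, t₁, t₂, ht₁, ht₂, hsum, by simp⟩

lemma setOf_mem_smul_dSum (hc₁ : Convex ℝ Δ₁) (hc₂ : Convex ℝ Δ₂) (hne₁ : Δ₁.Nonempty)
    (hne₂ : Δ₂.Nonempty) (u₁ : Fin n₁ → ℝ) (u₂ : Fin n₂ → ℝ) :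
    {ρ : ℝ | 0 ≤ ρ ∧ (u₁, u₂) ∈ ρ • dSum Δ₁ Δ₂} =
      {ρ : ℝ | 0 ≤ ρ ∧ u₁ ∈ ρ • Δ₁} + {ρ : ℝ | 0 ≤ ρ ∧ u₂ ∈ ρ • Δ₂} := by
  ext ρ
  simp only [mem_add, mem_ofPred_eq, mem_smul_set, mem_dSum_iff hc₁ hc₂ hne₁ hne₂]
  constructor
  · rintro ⟨hρ, _, ⟨t₁, t₂, ht₁, ht₂, hsum, a, ha, b, hb, rfl⟩, he⟩
    simp only [Prod.smul_mk, Prod.mk.injEq, smul_smul] at he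
    exact ⟨ρ * t₁, ⟨by positivity, a, ha, he.1⟩, ρ * t₂, ⟨by positivity, b, hb, he.2⟩,
      by rw [← mul_add, hsum, mul_one]⟩
  · rintro ⟨ρ₁, ⟨hρ₁, a, ha, rfl⟩, ρ₂, ⟨hρ₂, b, hb, rfl⟩, rfl⟩
    refine ⟨by positivity, ?_⟩
    rcases (add_nonneg hρ₁ hρ₂).eq_or_lt with h | h
    · obtain ⟨rfl, rfl⟩ : ρ₁ = 0 ∧ ρ₂ = 0 := ⟨by linarith, by linarith⟩
      exact ⟨_, ⟨1, 0, zero_le_one, le_rfl, add_zero 1, a, ha, b, hb, rfl⟩,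
        by simp [Prod.ext_iff]⟩
    · refine ⟨_, ⟨ρ₁ / (ρ₁ + ρ₂), ρ₂ / (ρ₁ + ρ₂), by positivity, by positivity,
        by field_simp, a, ha, b, hb, rfl⟩, ?_⟩
      simp only [Prod.smul_mk, smul_smul, mul_div_cancel₀ _ h.ne']

lemma rcone_dSum (hc₁ : Convex ℝ Δ₁) (hc₂ : Convex ℝ Δ₂) (hne₁ : Δ₁.Nonempty)
    (hne₂ : Δ₂.Nonempty) : rcone (dSum Δ₁ Δ₂) = rcone Δ₁ ×ˢ rcone Δ₂ := by
  ext ⟨u₁, u₂⟩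
  simp only [mem_prod, mem_rcone_iff_nonempty, setOf_mem_smul_dSum hc₁ hc₂ hne₁ hne₂,
    add_nonempty]

lemma wt_dSum (hc₁ : Convex ℝ Δ₁) (hc₂ : Convex ℝ Δ₂) {u₁ : Fin n₁ → ℝ} {u₂ : Fin n₂ → ℝ}
    (hu₁ : u₁ ∈ rcone Δ₁) (hu₂ : u₂ ∈ rcone Δ₂) :
    wt (dSum Δ₁ Δ₂) (u₁, u₂) = wt Δ₁ u₁ + wt Δ₂ u₂ := by
  rw [wt, setOf_mem_smul_dSum hc₁ hc₂ (nonempty_of_mem_rcone hu₁)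
    (nonempty_of_mem_rcone hu₂)]
  exact csInf_add (mem_rcone_iff_nonempty.1 hu₁) ⟨0, fun _ hρ => hρ.1⟩
    (mem_rcone_iff_nonempty.1 hu₂) ⟨0, fun _ hρ => hρ.1⟩

variable {L₁ : (Fin n₁ → ℝ) → Prop} {L₂ : (Fin n₂ → ℝ) → Prop}

lemma wtGradedBy_dSum_lcm {D₁ D₂ : ℕ} (hc₁ : Convex ℝ Δ₁) (hc₂ : Convex ℝ Δ₂)
    (hne₁ : Δ₁.Nonempty) (hne₂ : Δ₂.Nonempty) (h₁ : WtGradedBy L₁ Δ₁ D₁)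
    (h₂ : WtGradedBy L₂ Δ₂ D₂) (hD₁ : 0 < D₁) (hD₂ : 0 < D₂) :
    WtGradedBy (fun p => L₁ p.1 ∧ L₂ p.2) (dSum Δ₁ Δ₂) (Nat.lcm D₁ D₂) := by
  rintro ⟨u₁, u₂⟩ hu ⟨hL₁, hL₂⟩
  rw [rcone_dSum hc₁ hc₂ hne₁ hne₂] at hu
  have hD : 0 < Nat.lcm D₁ D₂ := Nat.lcm_pos hD₁ hD₂
  obtain ⟨m₁, hm₁⟩ := h₁ u₁ hu.1 hL₁
  obtain ⟨m₂, hm₂⟩ := h₂ u₂ hu.2 hL₂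
  obtain ⟨k₁, hk₁⟩ := exists_nat_div_of_dvd hD (Nat.dvd_lcm_left D₁ D₂) hm₁
  obtain ⟨k₂, hk₂⟩ := exists_nat_div_of_dvd hD (Nat.dvd_lcm_right D₁ D₂) hm₂
  exact ⟨k₁ + k₂, by rw [wt_dSum hc₁ hc₂ hu.1 hu.2, hk₁, hk₂, Nat.cast_add, add_div]⟩

lemma WtGradedBy.of_dSum_left {D : ℕ} (hc₁ : Convex ℝ Δ₁) (hc₂ : Convex ℝ Δ₂)
    (h0₂ : (0 : Fin n₂ → ℝ) ∈ Δ₂) (hL₂ : L₂ 0)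
    (h : WtGradedBy (fun p => L₁ p.1 ∧ L₂ p.2) (dSum Δ₁ Δ₂) D) : WtGradedBy L₁ Δ₁ D := by
  intro u hu hL
  have h0 := zero_mem_rcone h0₂
  have hmem : (u, 0) ∈ rcone (dSum Δ₁ Δ₂) := by
    rw [rcone_dSum hc₁ hc₂ (nonempty_of_mem_rcone hu) ⟨0, h0₂⟩]
    exact ⟨hu, h0⟩
  simpa only [wt_dSum hc₁ hc₂ hu h0, wt_zero h0₂, add_zero] using h (u, 0) hmem ⟨hL, hL₂⟩

lemma WtGradedBy.of_dSum_right {D : ℕ} (hc₁ : Convex ℝ Δ₁) (hc₂ : Convex ℝ Δ₂)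
    (h0₁ : (0 : Fin n₁ → ℝ) ∈ Δ₁) (hL₁ : L₁ 0)
    (h : WtGradedBy (fun p => L₁ p.1 ∧ L₂ p.2) (dSum Δ₁ Δ₂) D) : WtGradedBy L₂ Δ₂ D := by
  intro u hu hL
  have h0 := zero_mem_rcone h0₁
  have hmem : (0, u) ∈ rcone (dSum Δ₁ Δ₂) := by
    rw [rcone_dSum hc₁ hc₂ ⟨0, h0₁⟩ (nonempty_of_mem_rcone hu)]
    exact ⟨h0, hu⟩
  simpa only [wt_dSum hc₁ hc₂ h0 hu, wt_zero h0₁, zero_add] using h (0, u) hmem ⟨hL₁, hL⟩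

end DirectSum

lemma isIntVec_zero {n : ℕ} : isIntVec (0 : Fin n → ℝ) := fun _ => ⟨0, by simp⟩

theorem stmt6 {n₁ n₂ : ℕ} (Δ₁ : Set (Fin n₁ → ℝ)) (Δ₂ : Set (Fin n₂ → ℝ)) (D₁ D₂ : ℕ)
    (h₁ : IsIntegralPolytope isIntVec Δ₁) (h₂ : IsIntegralPolytope isIntVec Δ₂)
    (h0₁ : (0 : Fin n₁ → ℝ) ∈ Δ₁) (h0₂ : (0 : Fin n₂ → ℝ) ∈ Δ₂)
    (hD₁ : IsDenomWith isIntVec Δ₁ D₁) (hD₂ : IsDenomWith isIntVec Δ₂ D₂) :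
    IsDenomWith (fun p => isIntVec p.1 ∧ isIntVec p.2) (dSum Δ₁ Δ₂) (Nat.lcm D₁ D₂) := by
  have hc₁ := h₁.convex
  have hc₂ := h₂.convex
  refine ⟨Nat.lcm_pos hD₁.1 hD₂.1,
    wtGradedBy_dSum_lcm hc₁ hc₂ ⟨0, h0₁⟩ ⟨0, h0₂⟩ hD₁.2.1 hD₂.2.1 hD₁.1 hD₂.1, fun D hD h => ?_⟩
  have hdvd₁ : D₁ ∣ D := hD₁.dvd hD (.of_dSum_left hc₁ hc₂ h0₂ isIntVec_zero h)
  have hdvd₂ : D₂ ∣ D := hD₂.dvd hD (.of_dSum_right hc₁ hc₂ h0₁ isIntVec_zero h)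
  exact Nat.le_of_dvd hD (Nat.lcm_dvd hdvd₁ hdvd₂)
end

section
/- Let q be an odd prime power, k = 𝔽_q, ψ : k → ℂ^× an additive character, f : (k^×)^n → k any function, M ∈ M_n(ℤ) with 2ℤ^n ⊆ Mℤ^n, E as above, and φ_M : (k^×)^n → (k^×)^n the induced homomorphism. Then Σ_{x ∈ (k^×)^n} ψ(f(φ_M(x))) = Σ_{ε ∈ E} Σ_{x ∈ (k^×)^n} ψ(f(x)) χ₂^ε(x). -/
open scoped BigOperators Classical

/-- `φ_M(x)`: the tuple with `i`-th entry `∏_j x_j ^ m_{ji}`. -/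
noncomputable def phiMfun {k : Type*} [Field k] {n : ℕ}
    (M : Matrix (Fin n) (Fin n) ℤ) (x : Fin n → kˣ) : Fin n → kˣ :=
  fun i => ∏ j, x j ^ M j i

/-- `E` as a finset of `{0,1}^n` (represented by `Fin n → Fin 2`): the lift of
the kernel of `M mod 2` on `𝔽₂^n`. -/
noncomputable def Efin {n : ℕ} (M : Matrix (Fin n) (Fin n) ℤ) :
    Finset (Fin n → Fin 2) :=
  Finset.univ.filter fun ε =>
    ∀ j, (2 : ℤ) ∣ M.mulVec (fun i => ((ε i : ℕ) : ℤ)) j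

/-!
The identity is the orthogonality relation for the quadratic characters `χ₂^ε` of `(kˣ)ⁿ`.
Writing `K` for the kernel of `φ_M`, the left side is `|K| · Σ_{y ∈ Im φ_M} ψ(f y)`. On the
other side, `Σ_{ε ∈ E} χ₂^ε(y)` equals `|E|` on `Im φ_M`, because `M ε ≡ 0 mod 2` there, and
vanishes off it: since `kˣ` is cyclic, `y = g^a` with `a ∈ ℤⁿ`, and if every `χ₂^ε(y)` with
`ε ∈ E` were `1`, then `a` would be orthogonal mod 2 to `ker (M mod 2)`, which together with
`2ℤⁿ ⊆ Mℤⁿ` makes `a` a row combination `u M`, so that `y = φ_M(g^u)`. Hence some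
`χ₂^{ε₀}(y) ≠ 1`, and translating by `ε₀` inside `E` kills the sum. Summing both descriptions
over all `y` gives `|Im φ_M| · |K| = |(kˣ)ⁿ| = |Im φ_M| · |E|`, so `|K| = |E|`.
-/

open scoped Matrix Finset

theorem Finset.prod_zpow_eq_zpow_sum {ι G : Type*} [CommGroup G] (s : Finset ι) (f : ι → ℤ)
    (a : G) : ∏ i ∈ s, a ^ f i = a ^ ∑ i ∈ s, f i :=
  Finset.cons_induction (by simp) (fun _ _ _ _ ↦ by simp [_root_.zpow_add, *]) s

theorem natCast_val_fin_two (b : Fin 2) : ((b : ℕ) : ZMod 2) = (b : ZMod 2) :=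
  ZMod.natCast_zmod_val (show ZMod 2 from b)

theorem MonoidHom.sum_comp_eq_card_fiber_one_nsmul {G H β : Type*} [Group G] [Fintype G]
    [Monoid H] [DecidableEq H] [AddCommMonoid β] (f : G →* H) (g : H → β) :
    ∑ x, g (f x) = #{x | f x = 1} • ∑ y ∈ Finset.univ.image f, g y := by
  rw [Finset.sum_comp, Finset.smul_sum]
  refine Finset.sum_congr rfl fun y hy => ?_
  rw [card_fiber_eq_of_mem_range f (by simpa using hy) ⟨1, map_one f⟩]

namespace Matrix

theorem mul_eq_smul_one_comm {m R : Type*} [Fintype m] [DecidableEq m] [CommRing R]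
    [IsDomain R] {A B : Matrix m m R} {c : R} (hc : c ≠ 0) (h : A * B = c • 1) :
    B * A = c • 1 := by
  have hdet : A.det ≠ 0 := by
    have := congrArg det h
    rw [det_mul, det_smul, det_one, mul_one] at this
    exact left_ne_zero_of_mul (this ▸ pow_ne_zero _ hc)
  apply (isRegular_of_isLeftRegular_det (IsRegular.of_ne_zero hdet).left).left
  change A * (B * A) = A * (c • 1)
  rw [← Matrix.mul_assoc, h, smul_mul, Matrix.one_mul, Matrix.mul_smul, Matrix.mul_one]

theorem exists_mul_eq_smul_one {m R : Type*} [Fintype m] [DecidableEq m] [CommRing R]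
    (M : Matrix m m R) (c : R) (h : ∀ v, c • v ∈ LinearMap.range M.mulVecLin) :
    ∃ A, M * A = c • 1 := by
  choose w hw using fun j => h (Pi.single j 1)
  refine ⟨Matrix.of fun i j => w j i, ?_⟩
  ext i j
  simpa [mul_apply', mulVec, Pi.single_apply, one_apply, eq_comm] using congrFun (hw j) i

/-- With `M A = 2 = A M`, the columns of `A` lie in `ker (M mod 2)`, so `a ᵥ* A` is even,
and `u = (a ᵥ* A) / 2` satisfies `2 (u ᵥ* M) = a ᵥ* (A M) = 2 a`. -/
theorem exists_vecMul_eq_of_orthogonal_ker_mod_two {m : Type*} [Fintype m] [DecidableEq m]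
    {M : Matrix m m ℤ} (hM : ∃ A, M * A = (2 : ℤ) • 1) (a : m → ℤ)
    (ha : ∀ e : m → ZMod 2, M.map (Int.cast : ℤ → ZMod 2) *ᵥ e = 0 →
      e ⬝ᵥ (fun i => (a i : ZMod 2)) = 0) :
    ∃ u, u ᵥ* M = a := by
  obtain ⟨A, hMA⟩ := hM
  let red := Int.castRingHom (ZMod 2)
  have heven : ∀ j, Even ((a ᵥ* A) j) := by
    intro j
    rw [← ZMod.intCast_eq_zero_iff_even, ← eq_intCast red, RingHom.map_vecMul, vecMul,
      dotProduct_comm]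
    apply ha
    ext i
    calc _ = red ((M * A) i j) := by rw [RingHom.map_matrix_mul]; rfl
      _ = 0 := by
        rw [hMA, smul_apply, smul_eq_mul, map_mul, show red 2 = 0 from rfl, zero_mul]
  choose u hu using heven
  refine ⟨u, smul_right_injective (m → ℤ) (two_ne_zero (α := ℤ)) ?_⟩
  change (2 : ℤ) • (u ᵥ* M) = (2 : ℤ) • a
  rw [← smul_vecMul, show (2 : ℤ) • u = a ᵥ* A from funext fun j => hu j ▸ two_smul ℤ (u j),
    vecMul_vecMul, mul_eq_smul_one_comm two_ne_zero hMA, vecMul_smul, vecMul_one]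

end Matrix

section CharPow

variable {G ι : Type*} [CommGroup G] [Fintype ι]

/-- The paper's `χ^ε`, as a character of `G^ι`. -/
def charPow (χ : G →* ℂˣ) (ε : ι → Fin 2) : (ι → G) →* ℂˣ where
  toFun x := ∏ i, χ (x i) ^ (ε i : ℕ)
  map_one' := by simp
  map_mul' x y := by simp [mul_pow, Finset.prod_mul_distrib]

variable (χ : G →* ℂˣ)

theorem charPow_apply (ε : ι → Fin 2) (x : ι → G) :
    charPow χ ε x = ∏ i, χ (x i) ^ (ε i : ℕ) := rfl

theorem coe_charPow_apply (ε : ι → Fin 2) (x : ι → G) :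
    (charPow χ ε x : ℂ) = ∏ i, (χ (x i) : ℂ) ^ (ε i : ℕ) := by
  simp [charPow_apply]

@[simp]
theorem charPow_zero : charPow χ (0 : ι → Fin 2) = 1 := by
  ext x
  simp [charPow_apply]

theorem charPow_zpow (ε : ι → Fin 2) (g : G) (a : ι → ℤ) :
    charPow χ ε (fun i => g ^ a i) = χ g ^ ((fun i => ((ε i : ℕ) : ℤ)) ⬝ᵥ a) := by
  simp only [charPow_apply, map_zpow, ← zpow_natCast, ← _root_.zpow_mul, dotProduct,
    Finset.prod_zpow_eq_zpow_sum, mul_comm]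

variable {χ}

theorem charPow_add (hχ : χ ^ 2 = 1) (ε ε' : ι → Fin 2) :
    charPow χ (ε + ε') = charPow χ ε * charPow χ ε' := by
  have hsq : ∀ u, χ u ^ 2 = 1 := fun u => by simpa using DFunLike.congr_fun hχ u
  refine MonoidHom.ext fun x => ?_
  simp only [charPow_apply, MonoidHom.mul_apply, ← Finset.prod_mul_distrib]
  refine Finset.prod_congr rfl fun i _ => ?_
  rw [Pi.add_apply, Fin.val_add, ← pow_eq_pow_mod _ (hsq _), pow_add]

theorem charPow_ne_one (hχ : χ ≠ 1) {ε : ι → Fin 2} (hε : ε ≠ 0) : charPow χ ε ≠ 1 := by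
  obtain ⟨i, hi⟩ := Function.ne_iff.mp hε
  obtain ⟨u, hu⟩ := DFunLike.ne_iff.mp hχ
  have hεi : ε i = 1 := Fin.eq_one_of_ne_zero _ hi
  intro h
  apply hu
  simpa [charPow_apply, Pi.mulSingle_apply, apply_ite χ, ite_pow, hεi] using
    DFunLike.congr_fun h (Pi.mulSingle i u)

theorem sum_coe_charPow [Fintype G] [DecidableEq ι] (hχ : χ ≠ 1) (ε : ι → Fin 2) :
    ∑ x, (charPow χ ε x : ℂ) = if ε = 0 then (Fintype.card (ι → G) : ℂ) else 0 := by
  split_ifs with hε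
  · simp [hε]
  · exact sum_hom_units_eq_zero ((Units.coeHom ℂ).comp (charPow χ ε)) fun h =>
      charPow_ne_one hχ hε (MonoidHom.ext fun x => Units.ext (DFunLike.congr_fun h x))

end CharPow

section PhiM

variable {k : Type*} [Field k] {n : ℕ} (M : Matrix (Fin n) (Fin n) ℤ)

noncomputable def phiMHom : (Fin n → kˣ) →* (Fin n → kˣ) where
  toFun := phiMfun M
  map_one' := by funext i; simp [phiMfun]
  map_mul' x y := by funext i; simp [phiMfun, mul_zpow, Finset.prod_mul_distrib]

@[simp]
theorem coe_phiMHom : ⇑(phiMHom (k := k) M) = phiMfun M := rfl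

theorem phiMfun_zpow (g : kˣ) (u : Fin n → ℤ) :
    phiMfun M (fun j => g ^ u j) = fun i => g ^ (u ᵥ* M) i := by
  funext i
  simp only [phiMfun, ← _root_.zpow_mul, Finset.prod_zpow_eq_zpow_sum, Matrix.vecMul,
    dotProduct]

/-- `E` is the kernel of `M mod 2`, read through `ZMod 2 = Fin 2`. -/
theorem mem_Efin_iff {ε : Fin n → Fin 2} :
    ε ∈ Efin M ↔ M.map (Int.cast : ℤ → ZMod 2) *ᵥ (ε : Fin n → ZMod 2) = 0 := by
  simp only [Efin, Finset.mem_filter, Finset.mem_univ, true_and, funext_iff, Pi.zero_apply]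
  refine forall_congr' fun j => ?_
  have hred := RingHom.map_mulVec (Int.castRingHom (ZMod 2)) M (fun i => ((ε i : ℕ) : ℤ)) j
  simp only [Int.coe_castRingHom, Function.comp_def, Int.cast_natCast,
    natCast_val_fin_two] at hred
  rw [← hred, ZMod.intCast_zmod_eq_zero_iff_dvd, Nat.cast_ofNat]

theorem zero_mem_Efin : (0 : Fin n → Fin 2) ∈ Efin M := by
  rw [mem_Efin_iff]
  exact Matrix.mulVec_zero _

theorem add_mem_Efin {ε ε' : Fin n → Fin 2} (hε : ε ∈ Efin M) (hε' : ε' ∈ Efin M) :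
    ε + ε' ∈ Efin M := by
  rw [mem_Efin_iff] at *
  exact (Matrix.mulVec_add _ _ _).trans (by rw [hε, hε', add_zero])

theorem charPow_phiMfun_of_mem_Efin {χ : kˣ →* ℂˣ} (hχ : χ ^ 2 = 1) {ε : Fin n → Fin 2}
    (hε : ε ∈ Efin M) (z : Fin n → kˣ) : charPow χ ε (phiMfun M z) = 1 := by
  simp only [Efin, Finset.mem_filter, Finset.mem_univ, true_and] at hε
  have hsq : ∀ u, χ u ^ 2 = 1 := fun u => by simpa using DFunLike.congr_fun hχ u
  calc charPow χ ε (phiMfun M z)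
      = ∏ i, ∏ j, χ (z j) ^ (M j i * ((ε i : ℕ) : ℤ)) := by
        rw [charPow_apply]
        refine Finset.prod_congr rfl fun i _ => ?_
        rw [phiMfun, map_prod, ← Finset.prod_pow]
        exact Finset.prod_congr rfl fun j _ => by
          rw [map_zpow, ← zpow_natCast, ← _root_.zpow_mul]
    _ = ∏ j, χ (z j) ^ (M *ᵥ fun i => ((ε i : ℕ) : ℤ)) j := by
        rw [Finset.prod_comm]
        simp only [Finset.prod_zpow_eq_zpow_sum, Matrix.mulVec, dotProduct]
    _ = 1 := Finset.prod_eq_one fun j _ => by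
        obtain ⟨c, hc⟩ := hε j
        rw [hc, _root_.zpow_mul, zpow_ofNat, hsq, one_zpow]

theorem mem_range_phiMfun_of_charPow_eq_one [Finite k]
    (hN : ∀ v : Fin n → ℤ, (2 : ℤ) • v ∈ LinearMap.range M.mulVecLin)
    {χ : kˣ →* ℂˣ} (hχ : orderOf χ = 2) {y : Fin n → kˣ}
    (hy : ∀ ε ∈ Efin M, charPow χ ε y = 1) : y ∈ Set.range (phiMfun M) := by
  obtain ⟨g, hg⟩ := IsCyclic.exists_generator (α := kˣ)
  choose a ha using fun i => Subgroup.mem_zpowers_iff.mp (hg (y i))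
  have hχg : orderOf (χ g) = 2 := by
    refine orderOf_eq_prime ?_ fun h => ?_
    · rw [← MonoidHom.pow_apply, ← hχ, pow_orderOf_eq_one, MonoidHom.one_apply]
    · refine (orderOf_eq_prime_iff.mp hχ).2 (MonoidHom.ext fun u => ?_)
      obtain ⟨m, rfl⟩ := Subgroup.mem_zpowers_iff.mp (hg u)
      rw [map_zpow, h, one_zpow, MonoidHom.one_apply]
  have horth : ∀ e : Fin n → ZMod 2, M.map (Int.cast : ℤ → ZMod 2) *ᵥ e = 0 →
      e ⬝ᵥ (fun i => (a i : ZMod 2)) = 0 := by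
    intro e he
    let ε : Fin n → Fin 2 := e
    have h := hy ε ((mem_Efin_iff M).mpr he)
    rw [← funext ha, charPow_zpow, ← orderOf_dvd_iff_zpow_eq_one, hχg,
      ← ZMod.intCast_zmod_eq_zero_iff_dvd] at h
    simpa only [dotProduct, Int.cast_sum, Int.cast_mul, Int.cast_natCast, natCast_val_fin_two]
      using h
  obtain ⟨u, hu⟩ := Matrix.exists_vecMul_eq_of_orthogonal_ker_mod_two
    (M.exists_mul_eq_smul_one 2 hN) a horth
  exact ⟨fun j => g ^ u j, by rw [phiMfun_zpow, hu]; exact funext ha⟩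

theorem sum_charPow_Efin_of_mem_range {χ : kˣ →* ℂˣ} (hχ : χ ^ 2 = 1) {y : Fin n → kˣ}
    (hy : y ∈ Set.range (phiMfun M)) :
    ∑ ε ∈ Efin M, (charPow χ ε y : ℂ) = (Efin M).card := by
  obtain ⟨z, rfl⟩ := hy
  rw [Finset.sum_congr rfl fun ε hε => by
    rw [charPow_phiMfun_of_mem_Efin M hχ hε z, Units.val_one]]
  simp

theorem sum_charPow_Efin_of_not_mem_range [Finite k]
    (hN : ∀ v : Fin n → ℤ, (2 : ℤ) • v ∈ LinearMap.range M.mulVecLin)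
    {χ : kˣ →* ℂˣ} (hχ : orderOf χ = 2) {y : Fin n → kˣ} (hy : y ∉ Set.range (phiMfun M)) :
    ∑ ε ∈ Efin M, (charPow χ ε y : ℂ) = 0 := by
  have hsq : χ ^ 2 = 1 := hχ ▸ pow_orderOf_eq_one χ
  obtain ⟨ε₀, hε₀, hne⟩ : ∃ ε₀ ∈ Efin M, charPow χ ε₀ y ≠ 1 := by
    by_contra! h
    exact hy (mem_range_phiMfun_of_charPow_eq_one M hN hχ h)
  have hcancel : ∀ ε : Fin n → Fin 2, ε₀ + (ε₀ + ε) = ε := fun ε => funext fun i =>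
    (by decide : ∀ b c : Fin 2, b + (b + c) = c) _ _
  have hshift : (charPow χ ε₀ y : ℂ) * ∑ ε ∈ Efin M, (charPow χ ε y : ℂ) =
      ∑ ε ∈ Efin M, (charPow χ ε y : ℂ) := by
    rw [Finset.mul_sum]
    exact Finset.sum_nbij' (ε₀ + ·) (ε₀ + ·) (fun ε hε => add_mem_Efin M hε₀ hε)
      (fun ε hε => add_mem_Efin M hε₀ hε) (fun ε _ => hcancel ε) (fun ε _ => hcancel ε)
      fun ε _ => by rw [charPow_add hsq, MonoidHom.mul_apply, Units.val_mul]
  exact (mul_left_eq_self₀.mp hshift).resolve_left fun h => hne (Units.ext h)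

theorem card_fiber_one_phiMfun [Fintype k] [DecidableEq k]
    (hN : ∀ v : Fin n → ℤ, (2 : ℤ) • v ∈ LinearMap.range M.mulVecLin)
    {χ : kˣ →* ℂˣ} (hχ : orderOf χ = 2) :
    #{x : Fin n → kˣ | phiMfun M x = 1} = (Efin M).card := by
  have hfib := (phiMHom (k := k) M).sum_comp_eq_card_fiber_one_nsmul fun _ => 1
  have hchar : ∑ y : Fin n → kˣ, ∑ ε ∈ Efin M, (charPow χ ε y : ℂ) =
      Fintype.card (Fin n → kˣ) := by
    rw [Finset.sum_comm, Finset.sum_congr rfl fun ε _ =>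
      sum_coe_charPow (orderOf_eq_prime_iff.mp hχ).2 ε, Finset.sum_ite_eq' (Efin M) 0,
      if_pos (zero_mem_Efin M)]
  rw [← Finset.sum_subset (Finset.subset_univ (Finset.univ.image (phiMfun M))) fun y _ hy =>
      sum_charPow_Efin_of_not_mem_range M hN hχ (by simpa using hy),
    Finset.sum_congr rfl fun y hy => sum_charPow_Efin_of_mem_range M
      (hχ ▸ pow_orderOf_eq_one χ) (by simpa using hy)] at hchar
  simp only [coe_phiMHom, Finset.sum_const, Finset.card_univ, smul_eq_mul, mul_one,
    nsmul_eq_mul] at hfib hchar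
  have himage : 0 < #(Finset.univ.image (phiMfun (k := k) M)) :=
    Finset.card_pos.mpr (Finset.univ_nonempty.image _)
  refine Nat.eq_of_mul_eq_mul_right himage (hfib.symm.trans ?_)
  rw [mul_comm]
  exact_mod_cast hchar.symm

end PhiM

theorem stmt15_general {k : Type*} [Field k] [Fintype k] [DecidableEq k]
    {n : ℕ} (M : Matrix (Fin n) (Fin n) ℤ)
    (hN : ∀ v : Fin n → ℤ, (2 : ℤ) • v ∈ LinearMap.range M.mulVecLin)
    (χ₂ : kˣ →* ℂˣ) (hχ₂ : orderOf χ₂ = 2)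
    (ψ : AddChar k ℂ) (f : (Fin n → kˣ) → k) :
    ∑ x : Fin n → kˣ, ψ (f (phiMfun M x)) =
      ∑ ε ∈ Efin M, ∑ x : Fin n → kˣ,
        ψ (f x) * ∏ i, ((χ₂ (x i) : ℂˣ) : ℂ) ^ ((ε i : ℕ)) := by
  have hsq : χ₂ ^ 2 = 1 := hχ₂ ▸ pow_orderOf_eq_one χ₂
  calc ∑ x : Fin n → kˣ, ψ (f (phiMfun M x))
      = #{x : Fin n → kˣ | phiMfun M x = 1} • ∑ y ∈ Finset.univ.image (phiMfun M), ψ (f y) :=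
        (phiMHom M).sum_comp_eq_card_fiber_one_nsmul fun y => ψ (f y)
    _ = ∑ y ∈ Finset.univ.image (phiMfun M), ψ (f y) * ∑ ε ∈ Efin M, (charPow χ₂ ε y : ℂ) := by
        rw [card_fiber_one_phiMfun M hN hχ₂, Finset.smul_sum]
        refine Finset.sum_congr rfl fun y hy => ?_
        rw [sum_charPow_Efin_of_mem_range M hsq (by simpa using hy), nsmul_eq_mul, mul_comm]
    _ = ∑ y, ψ (f y) * ∑ ε ∈ Efin M, (charPow χ₂ ε y : ℂ) :=
        Finset.sum_subset (Finset.subset_univ _) fun y _ hy => by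
          rw [sum_charPow_Efin_of_not_mem_range M hN hχ₂ (by simpa using hy), mul_zero]
    _ = _ := by
        simp_rw [Finset.mul_sum, coe_charPow_apply]
        exact Finset.sum_comm

theorem stmt15 {k : Type*} [Field k] [Fintype k] [DecidableEq k]
    (q : ℕ) (hq : Fintype.card k = q) (hodd : Odd q)
    {n : ℕ} (M : Matrix (Fin n) (Fin n) ℤ)
    (hN : ∀ v : Fin n → ℤ, (2 : ℤ) • v ∈ LinearMap.range M.mulVecLin)
    (χ₂ : kˣ →* ℂˣ) (hχ₂ : orderOf χ₂ = 2)
    (ψ : AddChar k ℂ) (f : (Fin n → kˣ) → k) :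
    ∑ x : Fin n → kˣ, ψ (f (phiMfun M x)) =
      ∑ ε ∈ Efin M, ∑ x : Fin n → kˣ,
        ψ (f x) * ∏ i, ((χ₂ (x i) : ℂˣ) : ℂ) ^ ((ε i : ℕ)) :=
  stmt15_general M hN χ₂ hχ₂ ψ f
end
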